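/- Let K be a field, G a finite group, and S a simple finite-dimensional K[G]-module that admits no nonzero G-invariant quadratic form. Let Q be a nondegenerate G-invariant quadratic form on V := S ⊕ S. Then Q vanishes identically on every simple K[G]-submodule of V; in particular S ⊕ 0 is a totally isotropic submodule of half the dimension of V, and if char K ≠ 2 then det(B(e_i,e_j)) ≡ (−1)^{dim S} modulo (K^×)² for any basis (e_i) of V, B the polarization of Q; i.e. the discriminant disc(Q) is the trivial square class. -/

import Mathlib

/-!
A simple subrepresentation `U` of `S ⊕ S` meets one of the two summands trivially, so the
projection onto the other one maps `U` isomorphically onto `S`; transporting `Q|_U` along it gives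
an invariant form on `S`, which vanishes. Hence `S ⊕ 0` is totally isotropic, and in a basis
adapted to `S ⊕ 0` the Gram matrix is `[[0, C], [Cᵀ, D]]`, of determinant `(-1)^(dim S) (det C)²`;
a change of basis multiplies the determinant by a nonzero square.
-/

open QuadraticMap Matrix Module

section Equivariant

variable {K G S V : Type*} [CommRing K] [Monoid G] [AddCommGroup S] [Module K S]
  [AddCommGroup V] [Module K V] {ρ : Representation K G S} {σ : Representation K G V}
  {U : Submodule K V} {φ : V →ₗ[K] S}

theorem QuadraticMap.eq_zero_of_mem_of_map_eq_top
    (hnoq : ∀ q : QuadraticForm K S, (∀ (g : G) (x : S), q (ρ g x) = q x) → q = 0)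
    {Q : QuadraticForm K V} (hQ : ∀ (g : G) (x : V), Q (σ g x) = Q x)
    (hU : ∀ g : G, ∀ x ∈ U, σ g x ∈ U) (hφ : ∀ (g : G) (x : V), φ (σ g x) = ρ g (φ x))
    (hinj : Disjoint U (LinearMap.ker φ)) (hsurj : U.map φ = ⊤) {x : V} (hx : x ∈ U) :
    Q x = 0 := by
  let e : U ≃ₗ[K] S := LinearEquiv.ofBijective (φ.domRestrict U)
    ⟨LinearMap.injective_domRestrict_iff.mpr hinj, by
      rw [← LinearMap.range_eq_top, LinearMap.range_domRestrict, hsurj]⟩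
  have he : ∀ (g : G) (y : U), e.symm (ρ g (e y)) = ⟨σ g y, hU g y y.2⟩ := fun g y =>
    e.symm_apply_eq.mpr (hφ g y).symm
  have hq : Q.comp (U.subtype ∘ₗ e.symm.toLinearMap) = 0 := hnoq _ fun g s => by
    obtain ⟨y, rfl⟩ := e.surjective s
    simp [he, hQ]
  simpa [e] using congr($hq (e ⟨x, hx⟩))

theorem Submodule.map_eq_top_of_disjoint_ker
    (hsimple : ∀ W : Submodule K S, (∀ g : G, ∀ x ∈ W, ρ g x ∈ W) → W = ⊥ ∨ W = ⊤)
    (hU : ∀ g : G, ∀ x ∈ U, σ g x ∈ U) (hUne : U ≠ ⊥)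
    (hφ : ∀ (g : G) (x : V), φ (σ g x) = ρ g (φ x)) (hinj : Disjoint U (LinearMap.ker φ)) :
    U.map φ = ⊤ := by
  refine (hsimple _ ?_).resolve_left fun hbot => hUne ?_
  · rintro g _ ⟨y, hy, rfl⟩
    exact ⟨σ g y, hU g y hy, hφ g y⟩
  · exact disjoint_self.mp (hinj.mono_right (LinearMap.le_ker_iff_map.mpr hbot))


theorem QuadraticMap.eq_zero_of_mem_of_disjoint_ker
    (hnoq : ∀ q : QuadraticForm K S, (∀ (g : G) (x : S), q (ρ g x) = q x) → q = 0)
    (hsimple : ∀ W : Submodule K S, (∀ g : G, ∀ x ∈ W, ρ g x ∈ W) → W = ⊥ ∨ W = ⊤)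
    {Q : QuadraticForm K V} (hQ : ∀ (g : G) (x : V), Q (σ g x) = Q x)
    (hU : ∀ g : G, ∀ x ∈ U, σ g x ∈ U) (hUne : U ≠ ⊥)
    (hφ : ∀ (g : G) (x : V), φ (σ g x) = ρ g (φ x)) (hinj : Disjoint U (LinearMap.ker φ))
    {x : V} (hx : x ∈ U) : Q x = 0 :=
  eq_zero_of_mem_of_map_eq_top hnoq hQ hU hφ hinj
    (U.map_eq_top_of_disjoint_ker hsimple hU hUne hφ hinj) hx

end Equivariant

section Square

variable {K G S : Type*} [CommRing K] [Monoid G] [AddCommGroup S] [Module K S]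
  {ρ : Representation K G S}

theorem QuadraticMap.eq_zero_of_mem_of_isSimple_prod
    (hnoq : ∀ q : QuadraticForm K S, (∀ (g : G) (x : S), q (ρ g x) = q x) → q = 0)
    (hsimple : ∀ W : Submodule K S, (∀ g : G, ∀ x ∈ W, ρ g x ∈ W) → W = ⊥ ∨ W = ⊤)
    {Q : QuadraticForm K (S × S)} (hQ : ∀ (g : G) (x : S × S), Q (ρ.prod ρ g x) = Q x)
    {U : Submodule K (S × S)} (hU : ∀ g : G, ∀ x ∈ U, ρ.prod ρ g x ∈ U) (hUne : U ≠ ⊥)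
    (hUsimple : ∀ U' : Submodule K (S × S), U' ≤ U →
      (∀ g : G, ∀ x ∈ U', ρ.prod ρ g x ∈ U') → U' = ⊥ ∨ U' = U)
    {x : S × S} (hx : x ∈ U) : Q x = 0 := by
  have key := fun φ => eq_zero_of_mem_of_disjoint_ker (φ := φ) hnoq hsimple hQ hU hUne
  rcases hUsimple (U ⊓ LinearMap.ker (LinearMap.fst K S S)) inf_le_left
    (fun g y ⟨hyU, hy⟩ => ⟨hU g y hyU, by simp_all⟩) with hfst | hfst
  · exact key (LinearMap.fst K S S) (fun _ _ => rfl) (disjoint_iff.mpr hfst) hx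
  · refine key (LinearMap.snd K S S) (fun _ _ => rfl) ?_ hx
    rw [disjoint_iff, eq_bot_iff]
    rintro y ⟨hyU, hy2⟩
    have hy1 : y.1 = 0 := (inf_eq_left.mp hfst hyU :)
    exact Prod.ext hy1 hy2

theorem QuadraticMap.apply_inl_eq_zero
    (hnoq : ∀ q : QuadraticForm K S, (∀ (g : G) (x : S), q (ρ g x) = q x) → q = 0)
    {Q : QuadraticForm K (S × S)} (hQ : ∀ (g : G) (x : S × S), Q (ρ.prod ρ g x) = Q x) (s : S) :
    Q (s, 0) = 0 := by
  refine eq_zero_of_mem_of_map_eq_top (U := LinearMap.range (LinearMap.inl K S S))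
    (φ := LinearMap.fst K S S) hnoq hQ ?_ (fun _ _ => rfl) ?_ ?_ ⟨s, rfl⟩
  · rintro g _ ⟨t, rfl⟩
    exact ⟨ρ g t, by simp⟩
  · exact LinearMap.ker_fst K S S ▸ LinearMap.disjoint_inl_inr
  · rw [← LinearMap.range_comp, LinearMap.fst_comp_inl, LinearMap.range_id]

end Square

theorem Equiv.Perm.sign_sumComm_self (m : Type*) [Fintype m] [DecidableEq m] :
    Equiv.Perm.sign (Equiv.sumComm m m) = (-1) ^ Fintype.card m := by
  have h : Equiv.sumComm m m = (Equiv.boolProdEquivSum m).permCongr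
      (Equiv.prodCongrLeft fun _ => Equiv.swap false true) := by
    ext (i | i) <;> rfl
  rw [h, Equiv.Perm.sign_permCongr, Equiv.Perm.sign_prodCongrLeft]
  simp

theorem Matrix.det_fromBlocks_zero₁₁ {m R : Type*} [Fintype m] [DecidableEq m] [CommRing R]
    (B C D : Matrix m m R) :
    (fromBlocks 0 B C D).det = (-1) ^ Fintype.card m * B.det * C.det := by
  have hswap : (fromBlocks 0 B C D).submatrix (Equiv.sumComm m m) id = fromBlocks C D 0 B := by
    ext (i | i) (j | j) <;> rfl
  have h := det_permute (Equiv.sumComm m m) (fromBlocks 0 B C D)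
  rw [hswap, det_fromBlocks_zero₂₁, Equiv.Perm.sign_sumComm_self] at h
  have hs : ((-1 : R) ^ Fintype.card m) ^ 2 = 1 := by
    rw [← pow_mul, mul_comm, pow_mul]; simp
  push_cast at h
  linear_combination (-(-1 : R) ^ Fintype.card m) * h - (fromBlocks 0 B C D).det * hs

namespace LinearMap.BilinForm

open LinearMap (BilinForm)

variable {R M ι o : Type*} [CommRing R] [AddCommGroup M] [Module R M]
  [Fintype ι] [DecidableEq ι] [Fintype o] [DecidableEq o]

theorem toMatrix_reindex (B : BilinForm R M) (b : Basis ι R M) (e : ι ≃ o) :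
    toMatrix (b.reindex e) B = (toMatrix b B).submatrix e.symm e.symm := by
  ext i j
  simp [toMatrix_apply]

theorem exists_isUnit_det_toMatrix_eq [Nontrivial R] (B : BilinForm R M) (b : Basis ι R M)
    (c : Basis o R M) :
    ∃ u : R, IsUnit u ∧ (toMatrix c B).det = u ^ 2 * (toMatrix b B).det := by
  let b' := b.reindex (b.indexEquiv c)
  refine ⟨(b'.toMatrix c).det, b'.det_apply c ▸ b'.isUnit_det c, ?_⟩
  rw [← toMatrix_mul_basis_toMatrix b' c, det_mul, det_mul, det_transpose, toMatrix_reindex,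
    det_submatrix_equiv_self]
  ring

theorem det_toMatrix_of_isotropic {B : BilinForm R M} (hB : LinearMap.IsSymm B)
    (b : Basis (ι ⊕ ι) R M) (h : ∀ i j, B (b (.inl i)) (b (.inl j)) = 0) :
    (toMatrix b B).det =
      (-1) ^ Fintype.card ι * (of fun i j => B (b (.inl i)) (b (.inr j))).det ^ 2 := by
  have hblocks : toMatrix b B = fromBlocks 0 (of fun i j => B (b (.inl i)) (b (.inr j)))
      (of fun i j => B (b (.inl i)) (b (.inr j)))ᵀ (of fun i j => B (b (.inr i)) (b (.inr j))) := by
    ext (i | i) (j | j) <;> simp [toMatrix_apply, h]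
    exact hB.eq _ _
  rw [hblocks, det_fromBlocks_zero₁₁, det_transpose]
  ring

end LinearMap.BilinForm

open LinearMap.BilinForm in
theorem statement8_general {K G S : Type*} [Field K] [Group G]
    [AddCommGroup S] [Module K S] [FiniteDimensional K S]
    (ρ : Representation K G S)
    (hsimple : ∀ U : Submodule K S, (∀ g : G, ∀ x ∈ U, ρ g x ∈ U) → U = ⊥ ∨ U = ⊤)
    -- `S` admits no nonzero `G`-invariant quadratic form:
    (hnoq : ∀ q : QuadraticForm K S, (∀ (g : G) (x : S), q (ρ g x) = q x) → q = 0)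
    (Q : QuadraticForm K (S × S))
    (hnd : ∀ x : S × S, (∀ y : S × S, polar (⇑Q) x y = 0) → x = 0)
    (hinv : ∀ (g : G) (x : S × S), Q (LinearMap.prodMap (ρ g) (ρ g) x) = Q x) :
    -- `Q` vanishes on every simple `K[G]`-submodule of `S ⊕ S`
    (∀ U : Submodule K (S × S),
      (∀ g : G, ∀ x ∈ U, LinearMap.prodMap (ρ g) (ρ g) x ∈ U) →
      U ≠ ⊥ →
      (∀ U' : Submodule K (S × S), U' ≤ U →
        (∀ g : G, ∀ x ∈ U', LinearMap.prodMap (ρ g) (ρ g) x ∈ U') → U' = ⊥ ∨ U' = U) →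
      ∀ x ∈ U, Q x = 0) ∧
    -- in particular `S ⊕ 0` is totally isotropic (of half the dimension of `V`)
    (∀ s : S, Q (s, 0) = 0) ∧
    (ringChar K ≠ 2 →
      ∀ (n : ℕ) (e : Module.Basis (Fin n) K (S × S)),
        ∃ u : K, u ≠ 0 ∧
          (Matrix.of fun i j => polar (⇑Q) (e i) (e j)).det =
            (-1 : K) ^ Module.finrank K S * u ^ 2) := by
  have hisotropic : ∀ s : S, Q (s, 0) = 0 := apply_inl_eq_zero hnoq hinv
  refine ⟨fun U hU hUne hUsimple x hx =>
    eq_zero_of_mem_of_isSimple_prod hnoq hsimple hinv hU hUne hUsimple hx, hisotropic, ?_⟩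
  rintro - n e
  have hB : (polarBilin Q).IsSymm := ⟨polar_comm Q⟩
  let f := (finBasis K S).prod (finBasis K S)
  have hf := det_toMatrix_of_isotropic hB f fun i j => by
    simp [f, polar, hisotropic]
  obtain ⟨u, hu, hdet⟩ := exists_isUnit_det_toMatrix_eq (polarBilin Q) f e
  set c := (of fun i j => polarBilin Q (f (.inl i)) (f (.inr j))).det
  have hc : c ≠ 0 := fun h => (nondegenerate_iff_det_ne_zero f).mp
    (hB.isRefl.nondegenerate_iff_separatingLeft.mpr hnd) (by simp [hf, h])
  refine ⟨u * c, mul_ne_zero hu.ne_zero hc, ?_⟩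
  have hGram : of (fun i j => polar Q (e i) (e j)) = toMatrix e (polarBilin Q) := by
    ext i j
    rw [toMatrix_apply, polarBilin_apply_apply, of_apply]
  rw [hGram, hdet, hf, Fintype.card_fin]
  ring

/-- Let `K` be a field, `G` a finite group, and `S` a simple
finite-dimensional `K[G]`-module admitting no nonzero `G`-invariant quadratic form.
Let `Q` be a nondegenerate `G`-invariant quadratic form on `V := S ⊕ S`.  Then `Q`
vanishes on every simple `K[G]`-submodule of `V`; in particular `S ⊕ 0` is totally
isotropic of half the dimension, and if `char K ≠ 2` then the Gram determinant of `Q` is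
`(-1)^{dim S}` modulo squares, i.e. `disc Q` is the trivial square class. -/
theorem statement8 {K G S : Type*} [Field K] [Group G] [Finite G]
    [AddCommGroup S] [Module K S] [FiniteDimensional K S]
    (ρ : Representation K G S)
    (hnt : Nontrivial S)
    (hsimple : ∀ U : Submodule K S, (∀ g : G, ∀ x ∈ U, ρ g x ∈ U) → U = ⊥ ∨ U = ⊤)
    -- `S` admits no nonzero `G`-invariant quadratic form:
    (hnoq : ∀ q : QuadraticForm K S, (∀ (g : G) (x : S), q (ρ g x) = q x) → q = 0)
    (Q : QuadraticForm K (S × S))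
    (hnd : ∀ x : S × S, (∀ y : S × S, polar (⇑Q) x y = 0) → x = 0)
    (hinv : ∀ (g : G) (x : S × S), Q (LinearMap.prodMap (ρ g) (ρ g) x) = Q x) :
    -- `Q` vanishes on every simple `K[G]`-submodule of `S ⊕ S`
    (∀ U : Submodule K (S × S),
      (∀ g : G, ∀ x ∈ U, LinearMap.prodMap (ρ g) (ρ g) x ∈ U) →
      U ≠ ⊥ →
      (∀ U' : Submodule K (S × S), U' ≤ U →
        (∀ g : G, ∀ x ∈ U', LinearMap.prodMap (ρ g) (ρ g) x ∈ U') → U' = ⊥ ∨ U' = U) →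
      ∀ x ∈ U, Q x = 0) ∧
    -- in particular `S ⊕ 0` is totally isotropic (of half the dimension of `V`)
    (∀ s : S, Q (s, 0) = 0) ∧
    (ringChar K ≠ 2 →
      ∀ (n : ℕ) (e : Module.Basis (Fin n) K (S × S)),
        ∃ u : K, u ≠ 0 ∧
          (Matrix.of fun i j => polar (⇑Q) (e i) (e j)).det =
            (-1 : K) ^ Module.finrank K S * u ^ 2) :=
  statement8_general ρ hsimple hnoq Q hnd hinv
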